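/- arXiv:1807.05897 — 9 statements merged into one kernel-verified Lean document; each statement's English description precedes it below -/
import Mathlib

section
/- Let A be an n×n complex matrix whose characteristic polynomial is ∏_{i=1}^{g} (X^{f_i} − 1) for positive integers f_1,…,f_g. Then for every positive integer N, the algebraic multiplicity of the eigenvalue 1 of A^N equals ∑_{i=1}^{g} gcd(f_i, N). -/
/-!
The eigenvalues of `p(A)`, counted with multiplicity, are the values `p(λ)` at the eigenvalues `λ`
of `A`: over an algebraically closed field `c - p` splits, so `det (c - p(A))` is a product of
factors `det (A - μ) = ∏ (λ - μ)`, which regroups as `∏ (c - p(λ))`. Here the eigenvalues of `A`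
are the `f i`-th roots of unity, each simple, and exactly `gcd (f i, N)` of them satisfy `λ ^ N = 1`.
-/

open Polynomial

namespace Matrix

variable {R : Type*} [CommRing R] [IsDomain R] {n : Type*} [Fintype n] [DecidableEq n]

theorem det_sub_algebraMap_eq_prod_roots_charpoly {A : Matrix n n R} (hA : A.charpoly.Splits)
    (μ : R) : (A - algebraMap R _ μ).det = (A.charpoly.roots.map (· - μ)).prod := by
  rw [← neg_sub, det_neg, show algebraMap R _ μ = scalar n μ from rfl, ← eval_charpoly,
    hA.eval_eq_prod_roots_of_monic A.charpoly_monic, ← charpoly_natDegree_eq_dim A,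
    hA.natDegree_eq_card_roots, ← Multiset.card_map (μ - ·), ← Multiset.prod_map_neg,
    Multiset.map_map]
  simp

theorem det_aeval_eq_prod_roots_charpoly {A : Matrix n n R} (hA : A.charpoly.Splits) {p : R[X]}
    (hp : p.Splits) : (aeval A p).det = (A.charpoly.roots.map p.eval).prod := by
  let detAeval : R[X] →* R := detMonoidHom.comp (aeval A : R[X] →ₐ[R] Matrix n n R).toMonoidHom
  have hdet : ∀ q, (aeval A q).det = detAeval q := fun _ => rfl
  have hC : ∀ a, detAeval (C a) = a ^ A.charpoly.roots.card := fun a => by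
    simp [detAeval, ← hA.natDegree_eq_card_roots, algebraMap_eq_diagonal]
  have hlin : ∀ μ, detAeval (X - C μ) = (A.charpoly.roots.map (· - μ)).prod := fun μ => by
    simp [detAeval, ← det_sub_algebraMap_eq_prod_roots_charpoly hA]
  rw [hp.eq_prod_roots, hdet, map_mul, map_multiset_prod, Multiset.map_map, hC]
  simp only [Function.comp_def, hlin, eval_mul, eval_C, eval_multiset_prod, Multiset.map_map,
    eval_sub, eval_X]
  rw [Multiset.prod_map_prod_map, Multiset.prod_map_mul, Multiset.map_const',
    Multiset.prod_replicate]

variable {K : Type*} [Field K] [IsAlgClosed K]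

theorem charpoly_aeval_eq_prod_roots_charpoly (A : Matrix n n K) (p : K[X]) :
    (aeval A p).charpoly = ((A.charpoly.roots.map p.eval).map (X - C ·)).prod := by
  refine Polynomial.funext fun c => ?_
  have hsub : scalar n c - aeval A p = aeval A (C c - p) := by
    rw [map_sub, aeval_C]; rfl
  rw [eval_charpoly, hsub, det_aeval_eq_prod_roots_charpoly (IsAlgClosed.splits _)
    (IsAlgClosed.splits _), eval_multiset_prod, Multiset.map_map, Multiset.map_map]
  simp

theorem roots_charpoly_aeval (A : Matrix n n K) (p : K[X]) :
    (aeval A p).charpoly.roots = A.charpoly.roots.map p.eval := by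
  rw [charpoly_aeval_eq_prod_roots_charpoly, roots_multiset_prod_X_sub_C]

end Matrix

theorem IsPrimitiveRoot.filter_nthRoots_one_pow_eq_one {R : Type*} [CommRing R] [IsDomain R]
    [DecidableEq R] {ζ : R} {k : ℕ} (hζ : IsPrimitiveRoot ζ k) (hk : 0 < k) (N : ℕ) :
    (nthRoots k (1 : R)).filter (· ^ N = 1) = nthRoots (k.gcd N) 1 := by
  have hd : 0 < k.gcd N := Nat.gcd_pos_of_pos_left N hk
  have hζd : IsPrimitiveRoot (ζ ^ (k / k.gcd N)) (k.gcd N) :=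
    hζ.pow hk (Nat.div_mul_cancel (Nat.gcd_dvd_left k N)).symm
  rw [Multiset.Nodup.ext (hζ.nthRoots_one_nodup.filter _) hζd.nthRoots_one_nodup]
  intro x
  rw [Multiset.mem_filter, mem_nthRoots hk, mem_nthRoots hd, pow_gcd_eq_one]

theorem IsPrimitiveRoot.card_filter_nthRoots_one_pow_eq_one {R : Type*} [CommRing R] [IsDomain R]
    [DecidableEq R] {ζ : R} {k : ℕ} (hζ : IsPrimitiveRoot ζ k) (hk : 0 < k) (N : ℕ) :
    ((nthRoots k (1 : R)).filter (· ^ N = 1)).card = k.gcd N := by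
  rw [hζ.filter_nthRoots_one_pow_eq_one hk]
  exact (hζ.pow hk (Nat.div_mul_cancel (Nat.gcd_dvd_left k N)).symm).card_nthRoots_one

theorem charpoly_pow_rootMultiplicity_one
    (n g : ℕ) (A : Matrix (Fin n) (Fin n) ℂ) (f : Fin g → ℕ)
    (hf : ∀ i, 0 < f i)
    (hA : A.charpoly = ∏ i, ((X : ℂ[X]) ^ f i - 1)) :
    ∀ N : ℕ, 0 < N →
      ((A ^ N).charpoly).rootMultiplicity 1 = ∑ i, Nat.gcd (f i) N := by
  intro N _
  have hroots : A.charpoly.roots = Finset.univ.val.bind fun i => nthRoots (f i) (1 : ℂ) := by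
    rw [hA, roots_prod _ _ (hA ▸ A.charpoly_monic.ne_zero)]
    simp [nthRoots]
  rw [← count_roots, show A ^ N = aeval A ((X : ℂ[X]) ^ N) by simp, Matrix.roots_charpoly_aeval,
    Multiset.count_map, hroots, Multiset.filter_bind, Multiset.card_bind]
  simp only [eval_pow, eval_X, eq_comm (a := (1 : ℂ)), Function.comp_def,
    ← Finset.sum_eq_multiset_sum]
  exact Finset.sum_congr rfl fun i _ =>
    (Complex.isPrimitiveRoot_exp (f i) (hf i).ne').card_filter_nthRoots_one_pow_eq_one (hf i) N
end

section
/- Let S = {s_1, …, s_c} be a factor-closed set of distinct positive integers (i.e., every positive divisor of an element of S lies in S). Let M be the c×c matrix with entries m_{ij} = gcd(s_i, s_j). Then det(M) = ∏_{i=1}^{c} φ(s_i), where φ is Euler's totient function. -/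
theorem smith_determinant
    (c : ℕ) (s : Fin c → ℕ) (hs : ∀ i, 0 < s i) (hinj : Function.Injective s)
    (hfc : ∀ i : Fin c, ∀ d : ℕ, 0 < d → d ∣ s i → ∃ j, s j = d) :
    (Matrix.of fun i j : Fin c => (Nat.gcd (s i) (s j) : ℤ)).det
      = ∏ i, (Nat.totient (s i) : ℤ) := by
  classical
  set A : Matrix (Fin c) (Fin c) ℤ :=
    Matrix.of (fun i k : Fin c => if s k ∣ s i then (1 : ℤ) else 0) with hA
  set D : Matrix (Fin c) (Fin c) ℤ :=
    Matrix.diagonal (fun k => (Nat.totient (s k) : ℤ)) with hD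
  have key : ∀ i j : Fin c, (Nat.gcd (s i) (s j) : ℤ)
      = ∑ k, (if s k ∣ s i then (1 : ℤ) else 0) * (Nat.totient (s k) : ℤ)
          * (if s k ∣ s j then (1 : ℤ) else 0) := by
    intro i j
    set g := Nat.gcd (s i) (s j) with hg
    have hgpos : 0 < g := Nat.gcd_pos_of_pos_left _ (hs i)
    have h1 : ∀ k : Fin c,
        (if s k ∣ s i then (1 : ℤ) else 0) * (Nat.totient (s k) : ℤ)
          * (if s k ∣ s j then (1 : ℤ) else 0)
        = if s k ∣ g then (Nat.totient (s k) : ℤ) else 0 := by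
      intro k
      by_cases h1 : s k ∣ s i <;> by_cases h2 : s k ∣ s j <;>
        simp [h1, h2, hg, Nat.dvd_gcd_iff]
    rw [Finset.sum_congr rfl fun k _ => h1 k, Finset.sum_ite, Finset.sum_const_zero,
      add_zero]
    have hbij : ∑ k ∈ Finset.univ.filter (fun k => s k ∣ g), (Nat.totient (s k) : ℤ)
        = ∑ d ∈ g.divisors, (Nat.totient d : ℤ) := by
      refine Finset.sum_bij (fun k _ => s k) ?_ ?_ ?_ ?_
      · intro k hk
        simp only [Finset.mem_filter] at hk
        exact Nat.mem_divisors.mpr ⟨hk.2, hgpos.ne'⟩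
      · intro a _ b _ h; exact hinj h
      · intro d hd
        rw [Nat.mem_divisors] at hd
        obtain ⟨j', hj'⟩ := hfc i d (Nat.pos_of_dvd_of_pos hd.1 hgpos)
          (hd.1.trans (Nat.gcd_dvd_left _ _))
        exact ⟨j', by simp [hj', hd.1], hj'⟩
      · intro k _; rfl
    rw [hbij, ← Nat.cast_sum]
    norm_cast
    exact (Nat.sum_totient g).symm
  have hM : (Matrix.of fun i j : Fin c => (Nat.gcd (s i) (s j) : ℤ))
      = A * D * A.transpose := by
    ext i j
    simp only [Matrix.of_apply, Matrix.mul_apply, hD, Matrix.diagonal_apply,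
      Matrix.transpose_apply, hA, mul_ite, mul_zero, mul_one, ite_mul, zero_mul,
      Finset.sum_ite_eq, Finset.sum_ite_eq', Finset.mem_univ, if_true]
    rw [key i j]
    refine Finset.sum_congr rfl fun k _ => ?_
    by_cases h1 : s k ∣ s i <;> by_cases h2 : s k ∣ s j <;> simp [h1, h2]
  have hdetA : A.det = 1 := by
    set σ := Tuple.sort s with hσ
    have hmono : StrictMono (s ∘ σ) :=
      (Tuple.monotone_sort s).strictMono_of_injective (hinj.comp σ.injective)
    have : (A.submatrix σ σ).det = ∏ i, A.submatrix σ σ i i := by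
      apply Matrix.det_of_lowerTriangular
      intro i j hij
      simp only [Matrix.submatrix_apply, hA, Matrix.of_apply, ite_eq_right_iff]
      intro hdvd
      exfalso
      have hlt : s (σ i) < s (σ j) := hmono hij
      exact absurd (Nat.le_of_dvd (hs _) hdvd) (not_le.mpr hlt)
    rw [Matrix.det_submatrix_equiv_self] at this
    rw [this]
    apply Finset.prod_eq_one
    intro k _
    simp [hA]
  rw [hM, Matrix.det_mul, Matrix.det_mul, Matrix.det_transpose, hdetA, hD,
    Matrix.det_diagonal, one_mul, mul_one]
end

section
/- Let S = {s_1, …, s_c} be a factor-closed set of distinct positive integers and let M be the c×c matrix with entries gcd(s_i, s_j). Then M is nonsingular. -/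
open Matrix Finset

theorem smith_matrix_nonsingular
    (c : ℕ) (s : Fin c → ℕ) (hs : ∀ i, 0 < s i) (hinj : Function.Injective s)
    (hfc : ∀ i : Fin c, ∀ d : ℕ, 0 < d → d ∣ s i → ∃ j, s j = d) :
    (Matrix.of fun i j : Fin c => (Nat.gcd (s i) (s j) : ℤ)).det ≠ 0 := by
  set A : Matrix (Fin c) (Fin c) ℤ :=
    Matrix.of (fun i j => if s j ∣ s i then 1 else 0) with hA
  set D : Matrix (Fin c) (Fin c) ℤ :=
    Matrix.diagonal (fun k => (Nat.totient (s k) : ℤ)) with hD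
  have hM : (Matrix.of fun i j : Fin c => (Nat.gcd (s i) (s j) : ℤ)) = A * D * Aᵀ := by
    ext i j
    rw [Matrix.mul_apply]
    have hterm : ∀ k, (A * D) i k * Aᵀ k j
        = if s k ∣ Nat.gcd (s i) (s j) then (Nat.totient (s k) : ℤ) else 0 := by
      intro k
      rw [Matrix.mul_apply]
      simp only [hA, hD, Matrix.diagonal, Matrix.transpose_apply, Matrix.of_apply]
      rw [Finset.sum_eq_single k]
      · by_cases h1 : s k ∣ s i <;> by_cases h2 : s k ∣ s j <;>
          simp [h1, h2, Nat.dvd_gcd_iff]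
      · intro b _ hb; simp [hb]
      · intro h; exact absurd (Finset.mem_univ k) h
    rw [Finset.sum_congr rfl (fun k _ => hterm k)]
    set N := Nat.gcd (s i) (s j) with hNdef
    have hN : 0 < N := Nat.gcd_pos_of_pos_left _ (hs i)
    have key : ∑ k ∈ univ.filter (fun k => s k ∣ N), (s k).totient = N := by
      conv_rhs => rw [← Nat.sum_totient N]
      apply Finset.sum_bij (fun k _ => s k)
      · intro k hk
        exact Nat.mem_divisors.2 ⟨(Finset.mem_filter.1 hk).2, hN.ne'⟩
      · intro a _ b _ hab; exact hinj hab
      · intro d hd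
        obtain ⟨hdN, _⟩ := Nat.mem_divisors.1 hd
        obtain ⟨k, hk⟩ := hfc i d (Nat.pos_of_dvd_of_pos hdN hN)
          (hdN.trans (Nat.gcd_dvd_left _ _))
        exact ⟨k, Finset.mem_filter.2 ⟨Finset.mem_univ _, hk ▸ hdN⟩, hk⟩
      · intro k _; rfl
    have : ∑ k : Fin c, (if s k ∣ N then ((s k).totient : ℤ) else 0) = (N : ℤ) := by
      rw [← Finset.sum_filter]
      exact_mod_cast congrArg (Nat.cast : ℕ → ℤ) key
    rw [this]; rfl
  rw [hM, Matrix.det_mul, Matrix.det_mul, Matrix.det_transpose]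
  have hdetA : A.det = 1 := by
    set σ := Tuple.sort s with hσ
    have hmono : Monotone (s ∘ σ) := Tuple.monotone_sort s
    have hsm : StrictMono (s ∘ σ) := hmono.strictMono_of_injective (hinj.comp σ.injective)
    rw [← Matrix.det_submatrix_equiv_self σ A]
    rw [Matrix.det_of_lowerTriangular]
    · apply Finset.prod_eq_one
      intro k _
      simp [hA, Matrix.submatrix_apply]
    · intro p q hpq
      have : s (σ p) < s (σ q) := hsm hpq
      have hnd : ¬ s (σ q) ∣ s (σ p) := fun h => absurd (Nat.le_of_dvd (hs _) h) (not_le.2 this)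
      simp [hA, Matrix.submatrix_apply, hnd]
  rw [hdetA]
  simp only [one_mul, mul_one]
  rw [hD, Matrix.det_diagonal]
  refine Finset.prod_ne_zero_iff.2 fun k _ => ?_
  exact_mod_cast (Nat.totient_pos.2 (hs k)).ne'
end

section
/- Suppose a_1 ≤ a_2 ≤ … ≤ a_m and b_1 ≤ b_2 ≤ … ≤ b_n are two nondecreasing sequences of positive integers such that for every positive integer N, ∑_{d ∣ N} d · #{k : gcd(a_k, N) = d} = ∑_{d ∣ N} d · #{k : gcd(b_k, N) = d}. Then m = n and a_i = b_i for all i. -/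
open Finset

/-- Fiberwise decomposition of a filtered card over values of `a`. -/
private lemma fiber_card (m : ℕ) (a : ℕ → ℕ) (p : ℕ → Prop) [DecidablePred p]
    (t : Finset ℕ) (ht : ∀ k ∈ Finset.range m, p (a k) → a k ∈ t) :
    ((Finset.range m).filter (fun k => p (a k))).card
      = ∑ y ∈ t, ((Finset.range m).filter (fun k => p (a k) ∧ a k = y)).card := by
  rw [Finset.card_eq_sum_card_fiberwise (f := fun k => a k) (t := t)
    (fun k hk => ht k (Finset.mem_filter.mp hk).1 (Finset.mem_filter.mp hk).2)]
  exact Finset.sum_congr rfl fun y _ => by rw [Finset.filter_filter]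

private lemma sum_gcd_card (m N : ℕ) (a : ℕ → ℕ) (hN : 0 < N) :
    ∑ d ∈ N.divisors, d * ((Finset.range m).filter (fun k => Nat.gcd (a k) N = d)).card
      = ∑ k ∈ Finset.range m, Nat.gcd (a k) N := by
  rw [← Finset.sum_fiberwise_of_maps_to (g := fun k => Nat.gcd (a k) N) (t := N.divisors)
    (fun k _ => Nat.mem_divisors.mpr ⟨Nat.gcd_dvd_right _ _, hN.ne'⟩)
    (fun k => Nat.gcd (a k) N)]
  refine Finset.sum_congr rfl fun d hd => ?_
  rw [Finset.sum_congr rfl (fun k hk => (Finset.mem_filter.mp hk).2), Finset.sum_const,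
    smul_eq_mul, mul_comm]

private lemma sum_gcd_totient (m N : ℕ) (a : ℕ → ℕ) (hN : 0 < N) :
    ∑ k ∈ Finset.range m, Nat.gcd (a k) N
      = ∑ d ∈ N.divisors, Nat.totient d * ((Finset.range m).filter (fun k => d ∣ a k)).card := by
  have h1 : ∀ k, Nat.gcd (a k) N = ∑ d ∈ N.divisors, if d ∣ a k then Nat.totient d else 0 := by
    intro k
    rw [← Finset.sum_filter]
    have h2 : N.divisors.filter (· ∣ a k) = (Nat.gcd (a k) N).divisors := by
      ext d
      have : Nat.gcd (a k) N ≠ 0 := fun hg => hN.ne' (Nat.eq_zero_of_gcd_eq_zero_right hg)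
      simp [Nat.mem_divisors, Nat.dvd_gcd_iff, hN.ne', this, and_comm]
    rw [h2]
    exact (Nat.sum_totient _).symm
  rw [Finset.sum_congr rfl fun k _ => h1 k, Finset.sum_comm]
  refine Finset.sum_congr rfl fun d hd => ?_
  rw [← Finset.sum_filter, Finset.sum_const, smul_eq_mul, mul_comm]

private lemma totient_inversion (f g : ℕ → ℕ)
    (h : ∀ N, 0 < N → ∑ d ∈ N.divisors, Nat.totient d * f d
        = ∑ d ∈ N.divisors, Nat.totient d * g d) :
    ∀ N, 0 < N → f N = g N := by
  intro N
  induction N using Nat.strong_induction_on with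
  | _ N ih =>
    intro hN
    have hh := h N hN
    rw [← Nat.cons_self_properDivisors hN.ne', Finset.sum_cons, Finset.sum_cons] at hh
    have hps : ∑ d ∈ N.properDivisors, Nat.totient d * f d
        = ∑ d ∈ N.properDivisors, Nat.totient d * g d := by
      refine Finset.sum_congr rfl fun d hd => ?_
      obtain ⟨hdvd, hlt⟩ := Nat.mem_properDivisors.mp hd
      rw [ih d hlt (Nat.pos_of_dvd_of_pos hdvd hN)]
    have : Nat.totient N * f N = Nat.totient N * g N := by omega
    exact Nat.eq_of_mul_eq_mul_left (Nat.totient_pos.mpr hN) this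

private lemma dvd_count_split (mm T x : ℕ) (c : ℕ → ℕ)
    (hc : ∀ i < mm, 0 < c i) (hcT : ∀ i < mm, c i < T) (hx : 0 < x) :
    ((Finset.range mm).filter (fun k => x ∣ c k)).card
      = ((Finset.range mm).filter (fun k => c k = x)).card
        + ∑ y ∈ Finset.Ioc x T,
            (if x ∣ y then ((Finset.range mm).filter (fun k => c k = y)).card else 0) := by
  have hsplit : ((Finset.range mm).filter (fun k => x ∣ c k)).card
      = (((Finset.range mm).filter (fun k => x ∣ c k)).filter (fun k => c k = x)).card
        + (((Finset.range mm).filter (fun k => x ∣ c k)).filter (fun k => ¬ c k = x)).card :=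
    (Finset.card_filter_add_card_filter_not (fun k => c k = x)).symm
  rw [hsplit, Finset.filter_filter, Finset.filter_filter]
  congr 1
  · congr 1
    refine Finset.filter_congr fun k hk => ?_
    constructor
    · rintro ⟨_, h2⟩; exact h2
    · intro h2; exact ⟨h2 ▸ dvd_refl x, h2⟩
  · rw [fiber_card mm c (fun v => x ∣ v ∧ ¬ v = x) (Finset.Ioc x T) ?_]
    · refine Finset.sum_congr rfl fun y hy => ?_
      obtain ⟨hy1, hy2⟩ := Finset.mem_Ioc.mp hy
      by_cases hxy : x ∣ y
      · rw [if_pos hxy]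
        congr 1
        refine Finset.filter_congr fun k hk => ?_
        constructor
        · rintro ⟨_, h2⟩; exact h2
        · intro h2; exact ⟨⟨h2 ▸ hxy, by omega⟩, h2⟩
      · rw [if_neg hxy]
        rw [Finset.card_eq_zero, Finset.filter_eq_empty_iff]
        rintro k hk ⟨⟨hd, _⟩, h2⟩
        exact hxy (h2 ▸ hd)
    · intro k hk ⟨hd, hne⟩
      have h1 := hc k (Finset.mem_range.mp hk)
      have h2 := hcT k (Finset.mem_range.mp hk)
      have h3 := Nat.le_of_dvd h1 hd
      exact Finset.mem_Ioc.mpr ⟨by omega, by omega⟩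

private lemma count_eq_of_dvd (m n : ℕ) (a b : ℕ → ℕ)
    (ha : ∀ i < m, 0 < a i) (hb : ∀ i < n, 0 < b i)
    (hcc : ∀ d, 0 < d → ((Finset.range m).filter (fun k => d ∣ a k)).card
        = ((Finset.range n).filter (fun k => d ∣ b k)).card) :
    ∀ x, ((Finset.range m).filter (fun k => a k = x)).card
        = ((Finset.range n).filter (fun k => b k = x)).card := by
  set T := (∑ k ∈ Finset.range m, a k) + (∑ k ∈ Finset.range n, b k) + 1 with hT
  have haT : ∀ i < m, a i < T := by
    intro i hi
    have := Finset.single_le_sum (f := a) (fun j _ => Nat.zero_le _) (Finset.mem_range.mpr hi)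
    omega
  have hbT : ∀ i < n, b i < T := by
    intro i hi
    have := Finset.single_le_sum (f := b) (fun j _ => Nat.zero_le _) (Finset.mem_range.mpr hi)
    omega
  have empty_a : ∀ x, (∀ k < m, a k ≠ x) →
      ((Finset.range m).filter (fun k => a k = x)).card = 0 := by
    intro x hx
    rw [Finset.card_eq_zero, Finset.filter_eq_empty_iff]
    intro k hk
    exact hx k (Finset.mem_range.mp hk)
  have empty_b : ∀ x, (∀ k < n, b k ≠ x) →
      ((Finset.range n).filter (fun k => b k = x)).card = 0 := by
    intro x hx
    rw [Finset.card_eq_zero, Finset.filter_eq_empty_iff]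
    intro k hk
    exact hx k (Finset.mem_range.mp hk)
  have key : ∀ r x, 0 < x → T ≤ x + r →
      ((Finset.range m).filter (fun k => a k = x)).card
        = ((Finset.range n).filter (fun k => b k = x)).card := by
    intro r
    induction r with
    | zero =>
        intro x hx hxT
        rw [empty_a x (fun k hk hak => by have := haT k hk; omega),
          empty_b x (fun k hk hbk => by have := hbT k hk; omega)]
    | succ r ih =>
        intro x hx hxT
        have h1 := dvd_count_split m T x a ha haT hx
        have h2 := dvd_count_split n T x b hb hbT hx
        have h3 : ∑ y ∈ Finset.Ioc x T,
              (if x ∣ y then ((Finset.range m).filter (fun k => a k = y)).card else 0)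
            = ∑ y ∈ Finset.Ioc x T,
              (if x ∣ y then ((Finset.range n).filter (fun k => b k = y)).card else 0) := by
          refine Finset.sum_congr rfl fun y hy => ?_
          obtain ⟨hy1, hy2⟩ := Finset.mem_Ioc.mp hy
          rw [ih y (by omega) (by omega)]
        have h4 := hcc x hx
        omega
  intro x
  rcases Nat.eq_zero_or_pos x with rfl | hx
  · rw [empty_a 0 (fun k hk hak => by have := ha k hk; omega),
      empty_b 0 (fun k hk hbk => by have := hb k hk; omega)]
  · exact key T x hx (by omega)

private lemma le_count (mm x : ℕ) (c : ℕ → ℕ) (hc : ∀ i < mm, 0 < c i) :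
    ((Finset.range mm).filter (fun k => c k ≤ x)).card
      = ∑ y ∈ Finset.Icc 1 x, ((Finset.range mm).filter (fun k => c k = y)).card := by
  rw [fiber_card mm c (fun v => v ≤ x) (Finset.Icc 1 x) ?_]
  · refine Finset.sum_congr rfl fun y hy => ?_
    obtain ⟨hy1, hy2⟩ := Finset.mem_Icc.mp hy
    congr 1
    refine Finset.filter_congr fun k hk => ?_
    constructor
    · rintro ⟨_, h2⟩; exact h2
    · intro h2; exact ⟨by omega, h2⟩
  · intro k hk hck
    exact Finset.mem_Icc.mpr ⟨hc k (Finset.mem_range.mp hk), hck⟩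

private lemma le_iff_lt_card (mm : ℕ) (c : ℕ → ℕ)
    (hmono : ∀ i j, i ≤ j → j < mm → c i ≤ c j)
    (i : ℕ) (hi : i < mm) (x : ℕ) :
    c i ≤ x ↔ i < ((Finset.range mm).filter (fun k => c k ≤ x)).card := by
  constructor
  · intro hx
    have hsub : Finset.range (i+1) ⊆ (Finset.range mm).filter (fun k => c k ≤ x) := by
      intro j hj
      rw [Finset.mem_range] at hj
      exact Finset.mem_filter.mpr ⟨Finset.mem_range.mpr (by omega),
        le_trans (hmono j i (by omega) hi) hx⟩
    have := Finset.card_le_card hsub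
    simpa using this
  · intro hcard
    by_contra hax
    push_neg at hax
    have hsub : (Finset.range mm).filter (fun k => c k ≤ x) ⊆ Finset.range i := by
      intro k hk
      obtain ⟨hk1, hk2⟩ := Finset.mem_filter.mp hk
      rw [Finset.mem_range] at hk1 ⊢
      by_contra hki
      push_neg at hki
      exact absurd (le_trans (hmono i k hki hk1) hk2) (by omega)
    have := Finset.card_le_card hsub
    simp at this
    omega

theorem gcd_count_sequences_eq
    (m n : ℕ) (a b : ℕ → ℕ)
    (ha : ∀ i < m, 0 < a i) (hb : ∀ i < n, 0 < b i)
    (hamono : ∀ i j, i ≤ j → j < m → a i ≤ a j)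
    (hbmono : ∀ i j, i ≤ j → j < n → b i ≤ b j)
    (h : ∀ N : ℕ, 0 < N →
      ∑ d ∈ N.divisors, d * ((Finset.range m).filter (fun k => Nat.gcd (a k) N = d)).card
        = ∑ d ∈ N.divisors, d * ((Finset.range n).filter (fun k => Nat.gcd (b k) N = d)).card) :
    m = n ∧ ∀ i < m, a i = b i := by
  have hsum : ∀ N, 0 < N → ∑ d ∈ N.divisors,
        Nat.totient d * ((Finset.range m).filter (fun k => d ∣ a k)).card
      = ∑ d ∈ N.divisors,
        Nat.totient d * ((Finset.range n).filter (fun k => d ∣ b k)).card := by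
    intro N hN
    rw [← sum_gcd_totient m N a hN, ← sum_gcd_totient n N b hN,
      ← sum_gcd_card m N a hN, ← sum_gcd_card n N b hN]
    exact h N hN
  have hcc := totient_inversion _ _ hsum
  have hmn : m = n := by
    have h1 := hcc 1 one_pos
    simpa using h1
  have he := count_eq_of_dvd m n a b ha hb hcc
  have hF : ∀ x, ((Finset.range m).filter (fun k => a k ≤ x)).card
      = ((Finset.range n).filter (fun k => b k ≤ x)).card := by
    intro x
    rw [le_count m x a ha, le_count n x b hb]
    exact Finset.sum_congr rfl fun y _ => he y
  refine ⟨hmn, fun i hi => ?_⟩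
  have hi' : i < n := hmn ▸ hi
  have h1 : a i ≤ b i := by
    rw [le_iff_lt_card m a hamono i hi (b i), hF (b i)]
    exact (le_iff_lt_card n b hbmono i hi' (b i)).mp le_rfl
  have h2 : b i ≤ a i := by
    rw [le_iff_lt_card n b hbmono i hi' (a i), ← hF (a i)]
    exact (le_iff_lt_card m a hamono i hi (a i)).mp le_rfl
  omega
end

section
/- Suppose (a_1, …, a_m) and (b_1, …, b_n) are tuples of positive integers such that for every positive integer N, ∑_{k=1}^{m} gcd(a_k, N) = ∑_{k=1}^{n} gcd(b_k, N). Then the multiset {a_1, …, a_m} equals the multiset {b_1, …, b_n}. -/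
/-!
Writing `gcd(x, N) = ∑_{e ∣ N, e ∣ x} φ(e)` turns the hypothesis into
`∑_{e ∣ N} φ(e) c_a(e) = ∑_{e ∣ N} φ(e) c_b(e)` for every `N`, where `c_a(e)` counts the `a_k`
divisible by `e`. Möbius inversion (here: strong induction over the divisor lattice) gives
`c_a = c_b`. These divisibility counts determine a multiset of positive integers: its largest
element `M` is the only element divisible by `M`, so it occurs on both sides, can be removed,
and the argument repeats.
-/

open Finset

theorem Nat.gcd_eq_sum_totient_filter_dvd (a : ℕ) {N : ℕ} (hN : N ≠ 0) :
    a.gcd N = ∑ e ∈ N.divisors with e ∣ a, e.totient := by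
  rw [← Nat.sum_totient (a.gcd N)]
  congr 1
  ext e
  simp only [mem_divisors, dvd_gcd_iff, ne_eq, gcd_eq_zero_iff, hN, and_false,
    not_false_eq_true, and_true, mem_filter]
  tauto

theorem Multiset.sum_map_gcd_eq_sum_totient_mul_countP (s : Multiset ℕ) {N : ℕ} (hN : N ≠ 0) :
    (s.map (Nat.gcd · N)).sum = ∑ e ∈ N.divisors, e.totient * s.countP (e ∣ ·) := by
  induction s using Multiset.induction_on with
  | empty => simp
  | cons x s ih =>
    simp only [Multiset.map_cons, Multiset.sum_cons, Multiset.countP_cons, ih,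
      Nat.gcd_eq_sum_totient_filter_dvd x hN, Finset.sum_filter, mul_add, mul_ite, mul_one,
      mul_zero, Finset.sum_add_distrib, add_comm]

theorem Nat.eq_of_sum_divisors_eq {M : Type*} [AddCancelCommMonoid M] {f g : ℕ → M}
    (h : ∀ n ≠ 0, ∑ d ∈ n.divisors, f d = ∑ d ∈ n.divisors, g d) {n : ℕ} (hn : n ≠ 0) :
    f n = g n := by
  induction n using Nat.strong_induction_on with
  | _ n ih =>
    have hproper : ∑ d ∈ n.properDivisors, f d = ∑ d ∈ n.properDivisors, g d :=
      Finset.sum_congr rfl fun d hd =>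
        ih d (Nat.mem_properDivisors.1 hd).2 (Nat.pos_of_mem_properDivisors hd).ne'
    have hn' := h n hn
    rwa [← Nat.cons_self_properDivisors hn, Finset.sum_cons, Finset.sum_cons, hproper,
      add_left_inj] at hn'

theorem Multiset.mem_of_countP_dvd_eq {s t : Multiset ℕ} {M : ℕ} (hM : M ∈ s)
    (ht : ∀ y ∈ t, 0 < y ∧ y ≤ M) (h : s.countP (M ∣ ·) = t.countP (M ∣ ·)) : M ∈ t := by
  obtain ⟨y, hy, hMy⟩ := Multiset.countP_pos.1 (h ▸ Multiset.countP_pos.2 ⟨M, hM, dvd_rfl⟩)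
  rwa [le_antisymm (ht y hy).2 (Nat.le_of_dvd (ht y hy).1 hMy)] at hy

theorem Multiset.eq_of_countP_dvd_eq {s t : Multiset ℕ} (hs : ∀ x ∈ s, 0 < x)
    (ht : ∀ x ∈ t, 0 < x) (h : ∀ d ≠ 0, s.countP (d ∣ ·) = t.countP (d ∣ ·)) : s = t := by
  obtain hst | hne := (s + t).toFinset.eq_empty_or_nonempty
  · simp_all
  obtain ⟨M, hM, hmax⟩ := (s + t).toFinset.exists_max_image id hne
  simp only [Multiset.mem_toFinset, id, Multiset.mem_add] at hM hmax
  have hMst : M ∈ s ∧ M ∈ t := by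
    rcases hM with hMs | hMt
    · exact ⟨hMs, mem_of_countP_dvd_eq hMs (fun y hy => ⟨ht y hy, hmax y (.inr hy)⟩)
        (h M (hs M hMs).ne')⟩
    · exact ⟨mem_of_countP_dvd_eq hMt (fun y hy => ⟨hs y hy, hmax y (.inl hy)⟩)
        (h M (ht M hMt).ne').symm, hMt⟩
  obtain ⟨s', rfl⟩ := Multiset.exists_cons_of_mem hMst.1
  obtain ⟨t', rfl⟩ := Multiset.exists_cons_of_mem hMst.2
  have hst' : s' = t' := eq_of_countP_dvd_eq
    (fun x hx => hs x (Multiset.mem_cons_of_mem hx))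
    (fun x hx => ht x (Multiset.mem_cons_of_mem hx))
    (fun d hd => by simpa only [Multiset.countP_cons, add_left_inj] using h d hd)
  rw [hst']
termination_by card s
decreasing_by simp_all

theorem gcd_sum_multiset_eq
    (m n : ℕ) (a : Fin m → ℕ) (b : Fin n → ℕ)
    (ha : ∀ i, 0 < a i) (hb : ∀ i, 0 < b i)
    (h : ∀ N : ℕ, 0 < N → ∑ k, Nat.gcd (a k) N = ∑ k, Nat.gcd (b k) N) :
    Multiset.map a Finset.univ.val = Multiset.map b Finset.univ.val := by
  set A := Multiset.map a Finset.univ.val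
  set B := Multiset.map b Finset.univ.val
  have hsum (N : ℕ) (hN : N ≠ 0) : ∑ e ∈ N.divisors, e.totient * A.countP (e ∣ ·) =
      ∑ e ∈ N.divisors, e.totient * B.countP (e ∣ ·) := by
    rw [← A.sum_map_gcd_eq_sum_totient_mul_countP hN, ← B.sum_map_gcd_eq_sum_totient_mul_countP hN,
      Multiset.map_map, Multiset.map_map]
    exact h N (Nat.pos_of_ne_zero hN)
  refine Multiset.eq_of_countP_dvd_eq (by simpa [A] using ha) (by simpa [B] using hb) fun d hd => ?_
  exact Nat.eq_of_mul_eq_mul_left (Nat.totient_pos.2 (Nat.pos_of_ne_zero hd))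
    (Nat.eq_of_sum_divisors_eq hsum hd)
end

section
/- Let L be a positive integer, let s_1, …, s_c be the positive divisors of L, and let x ∈ ℤ^c satisfy ∑_{j=1}^{c} gcd(s_i, s_j) x_j = 0 for all i = 1, …, c. Then x = 0. -/
theorem gcd_matrix_divisors_kernel_trivial
    (L c : ℕ) (hL : 0 < L) (s : Fin c → ℕ) (hinj : Function.Injective s)
    (hrange : ∀ d : ℕ, d ∈ L.divisors ↔ ∃ i, s i = d)
    (x : Fin c → ℤ)
    (hx : ∀ i, ∑ j, (Nat.gcd (s i) (s j) : ℤ) * x j = 0) :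
    x = 0 := by
  have hL0 : L ≠ 0 := hL.ne'
  have hsjL : ∀ j, s j ∣ L := fun j =>
    (Nat.mem_divisors.1 ((hrange (s j)).2 ⟨j, rfl⟩)).1
  set z : ℕ → ℤ := fun d => ∑ j, if d ∣ s j then x j else 0 with hz
  -- gcd as a sum of totients over common divisors
  have hgcd : ∀ a b : ℕ, a ∣ L → b ∣ L →
      (Nat.gcd a b : ℤ) = ∑ d ∈ L.divisors, if d ∣ a ∧ d ∣ b then (d.totient : ℤ) else 0 := by
    intro a b ha hb
    have ha0 : a ≠ 0 := fun h => hL0 (Nat.eq_zero_of_zero_dvd (h ▸ ha))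
    have hg0 : Nat.gcd a b ≠ 0 := fun h => ha0 (Nat.eq_zero_of_gcd_eq_zero_left h)
    have h1 : (Nat.gcd a b).divisors = L.divisors.filter (fun d => d ∣ a ∧ d ∣ b) := by
      ext d
      simp only [Nat.mem_divisors, Finset.mem_filter]
      constructor
      · rintro ⟨hd, -⟩
        exact ⟨⟨(hd.trans (Nat.gcd_dvd_left a b)).trans ha, hL0⟩,
          hd.trans (Nat.gcd_dvd_left a b), hd.trans (Nat.gcd_dvd_right a b)⟩
      · rintro ⟨-, h2, h3⟩
        exact ⟨Nat.dvd_gcd h2 h3, hg0⟩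
    calc (Nat.gcd a b : ℤ) = ∑ d ∈ (Nat.gcd a b).divisors, (d.totient : ℤ) := by
          rw [← Nat.cast_sum, Nat.sum_totient]
      _ = _ := by rw [h1, Finset.sum_filter]
  -- each row of the system, rewritten
  have hrow : ∀ a : ℕ, a ∣ L →
      ∑ d ∈ L.divisors, (if d ∣ a then (d.totient : ℤ) * z d else 0) = 0 := by
    intro a ha
    obtain ⟨i, hi⟩ := (hrange a).1 (Nat.mem_divisors.2 ⟨ha, hL0⟩)
    subst hi
    have e1 : ∑ j, (Nat.gcd (s i) (s j) : ℤ) * x j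
        = ∑ d ∈ L.divisors, (if d ∣ s i then (d.totient : ℤ) * z d else 0) := by
      calc ∑ j, (Nat.gcd (s i) (s j) : ℤ) * x j
          = ∑ j, ∑ d ∈ L.divisors,
              (if d ∣ s i ∧ d ∣ s j then (d.totient : ℤ) else 0) * x j := by
            refine Finset.sum_congr rfl fun j _ => ?_
            rw [hgcd (s i) (s j) (hsjL i) (hsjL j), Finset.sum_mul]
        _ = ∑ d ∈ L.divisors, ∑ j,
              (if d ∣ s i ∧ d ∣ s j then (d.totient : ℤ) else 0) * x j := Finset.sum_comm
        _ = ∑ d ∈ L.divisors, (if d ∣ s i then (d.totient : ℤ) * z d else 0) := by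
            refine Finset.sum_congr rfl fun d _ => ?_
            by_cases hda : d ∣ s i
            · simp only [hda, true_and, if_true, hz, Finset.mul_sum]
              refine Finset.sum_congr rfl fun j _ => ?_
              by_cases h : d ∣ s j <;> simp [h]
            · simp [hda]
    rw [← e1]
    exact hx i
  -- upward induction: each totient * z term vanishes
  have hw : ∀ d : ℕ, d ∣ L → (d.totient : ℤ) * z d = 0 := by
    intro d
    induction d using Nat.strong_induction_on with
    | _ d IH =>
      intro hdL
      have hd0 : 0 < d := Nat.pos_of_dvd_of_pos hdL hL
      have hdmem : d ∈ L.divisors := Nat.mem_divisors.2 ⟨hdL, hL0⟩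
      have h0 := hrow d hdL
      rw [← Finset.add_sum_erase _ _ hdmem, if_pos dvd_rfl] at h0
      have hrest : ∑ e ∈ L.divisors.erase d,
          (if e ∣ d then (e.totient : ℤ) * z e else 0) = 0 := by
        refine Finset.sum_eq_zero fun e he => ?_
        by_cases hed : e ∣ d
        · rw [if_pos hed]
          have heL : e ∣ L := (Nat.mem_divisors.1 (Finset.mem_erase.1 he).2).1
          have hlt : e < d :=
            lt_of_le_of_ne (Nat.le_of_dvd hd0 hed) (Finset.mem_erase.1 he).1
          exact IH e hlt heL
        · rw [if_neg hed]
      linarith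
  have hzz : ∀ d : ℕ, d ∣ L → z d = 0 := by
    intro d hd
    have hd0 : 0 < d := Nat.pos_of_dvd_of_pos hd hL
    have hpos : (0 : ℤ) < (d.totient : ℤ) := by
      exact_mod_cast Nat.totient_pos.2 hd0
    have := hw d hd
    rcases mul_eq_zero.1 this with h | h
    · exact absurd h hpos.ne'
    · exact h
  -- downward induction on L - s i
  have main : ∀ n : ℕ, ∀ i, L - s i = n → x i = 0 := by
    intro n
    induction n using Nat.strong_induction_on with
    | _ n IH =>
      rintro i rfl
      have hzi : ∑ j, (if s i ∣ s j then x j else 0) = 0 := hzz (s i) (hsjL i)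
      rw [← Finset.add_sum_erase _ _ (Finset.mem_univ i), if_pos dvd_rfl] at hzi
      have hrest : ∑ j ∈ Finset.univ.erase i, (if s i ∣ s j then x j else 0) = 0 := by
        refine Finset.sum_eq_zero fun j hj => ?_
        by_cases hd : s i ∣ s j
        · rw [if_pos hd]
          have hj0 : 0 < s j := Nat.pos_of_dvd_of_pos (hsjL j) hL
          have hne : s i ≠ s j := fun h => (Finset.mem_erase.1 hj).1 (hinj h.symm)
          have hlt : s i < s j := lt_of_le_of_ne (Nat.le_of_dvd hj0 hd) hne
          have hjle : s j ≤ L := Nat.le_of_dvd hL (hsjL j)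
          exact IH (L - s j) (by omega) j rfl
        · rw [if_neg hd]
      linarith
  funext i
  exact main (L - s i) i rfl
end

section
/- Let σ and τ be permutations of finite sets of sizes m and n respectively. If for every positive integer N, σ^N and τ^N have the same number of fixed points, then m = n and σ and τ have the same cycle type (i.e., the multisets of their cycle lengths coincide). -/
/-!
The number of fixed points of `σ ^ N` is `∑ d ∣ N, a_d(σ)`, where `a_d(σ)` counts the points of
period exactly `d`, so Möbius inversion recovers every `a_d(σ)` from the fixed-point counts.
For `d ≥ 2` the points of period `d` are exactly the points on the `d`-cycles of `σ`, hence
`a_d(σ) = d · #{d-cycles of σ}`, and these numbers are the cycle type. The sizes agree because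
`σ ^ N` and `τ ^ N` are both the identity for `N = ord σ · ord τ`.
-/

open Finset MulAction

namespace Equiv.Perm

variable {α β : Type*}

theorem pow_apply_eq_self_iff_period_dvd (σ : Perm α) (x : α) (N : ℕ) :
    (σ ^ N) x = x ↔ period σ x ∣ N := by
  rw [← Perm.smul_def]
  exact pow_smul_eq_iff_period_dvd

theorem IsCycleOn.period_eq_card {σ : Perm α} {s : Finset α} {x : α}
    (hσ : σ.IsCycleOn s) (hx : x ∈ s) : period σ x = #s :=
  Nat.dvd_antisymm ((pow_apply_eq_self_iff_period_dvd σ x _).1 ((hσ.pow_apply_eq hx).2 dvd_rfl))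
    ((hσ.pow_apply_eq hx).1 ((pow_apply_eq_self_iff_period_dvd σ x _).2 dvd_rfl))

variable [Fintype α] [Fintype β]

noncomputable def periodCount (σ : Perm α) (k : ℕ) : ℕ :=
  #{x : α | period σ x = k}

variable [DecidableEq α] [DecidableEq β]

theorem card_fixedPoints_pow_eq_sum_periodCount (σ : Perm α) {N : ℕ} (hN : 0 < N) :
    #{x | (σ ^ N) x = x} = ∑ d ∈ N.divisors, periodCount σ d := by
  rw [card_eq_sum_card_fiberwise (f := fun x : α => period σ x) (t := N.divisors)]
  · refine sum_congr rfl fun d hd => ?_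
    rw [periodCount, filter_filter]
    refine congrArg card (filter_congr fun x _ => ?_)
    rw [pow_apply_eq_self_iff_period_dvd]
    exact ⟨fun h => h.2, fun h => ⟨h ▸ Nat.dvd_of_mem_divisors hd, h⟩⟩
  · intro x hx
    simp only [coe_filter, mem_univ, true_and, Set.mem_ofPred_eq,
      pow_apply_eq_self_iff_period_dvd] at hx
    exact Nat.mem_divisors.2 ⟨hx, hN.ne'⟩

theorem periodCount_eq_sum_moebius (σ : Perm α) {n : ℕ} (hn : 0 < n) :
    (periodCount σ n : ℤ) =
      ∑ p ∈ n.divisorsAntidiagonal, ArithmeticFunction.moebius p.1 • (#{x | (σ ^ p.2) x = x} : ℤ) :=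
  (ArithmeticFunction.sum_eq_iff_sum_smul_moebius_eq (f := fun d => (periodCount σ d : ℤ))
    (g := fun N => (#{x | (σ ^ N) x = x} : ℤ)) |>.1 (fun N hN => by
      exact_mod_cast (card_fixedPoints_pow_eq_sum_periodCount σ hN).symm) n hn).symm

theorem periodCount_eq_of_card_fixedPoints_pow_eq {σ : Perm α} {τ : Perm β}
    (h : ∀ N, 0 < N → #{x | (σ ^ N) x = x} = #{y | (τ ^ N) y = y}) {k : ℕ} (hk : 0 < k) :
    periodCount σ k = periodCount τ k := by
  have hcast : (periodCount σ k : ℤ) = periodCount τ k := by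
    rw [periodCount_eq_sum_moebius σ hk, periodCount_eq_sum_moebius τ hk]
    refine sum_congr rfl fun p hp => ?_
    rw [h p.2 (Nat.pos_of_mem_divisors (Nat.snd_mem_divisors_of_mem_antidiagonal hp))]
  exact_mod_cast hcast

theorem filter_period_eq_biUnion_support (σ : Perm α) {k : ℕ} (hk : 2 ≤ k) :
    ({x : α | period σ x = k} : Finset α) =
      {c ∈ σ.cycleFactorsFinset | #c.support = k}.biUnion support := by
  ext x
  simp only [mem_filter, mem_univ, true_and, mem_biUnion]
  constructor
  · intro hx
    have hσx : x ∈ σ.support := by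
      rw [mem_support, ← Perm.smul_def, ne_eq, ← period_eq_one_iff]
      omega
    obtain ⟨c, hc, hxc⟩ := mem_support_iff_mem_support_of_mem_cycleFactorsFinset.1 hσx
    exact ⟨c, ⟨hc, (isCycleOn_support_of_mem_cycleFactorsFinset hc).period_eq_card hxc ▸ hx⟩, hxc⟩
  · rintro ⟨c, ⟨hc, rfl⟩, hxc⟩
    exact (isCycleOn_support_of_mem_cycleFactorsFinset hc).period_eq_card hxc

theorem periodCount_eq_mul_count_cycleType (σ : Perm α) {k : ℕ} (hk : 2 ≤ k) :
    periodCount σ k = k * σ.cycleType.count k := by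
  have hdisj : (({c ∈ σ.cycleFactorsFinset | #c.support = k} : Finset (Perm α)) :
      Set (Perm α)).PairwiseDisjoint support := fun c hc d hd hcd =>
    (σ.cycleFactorsFinset_pairwise_disjoint (mem_filter.1 hc).1 (mem_filter.1 hd).1
      hcd).disjoint_support
  have hcount : σ.cycleType.count k = #{c ∈ σ.cycleFactorsFinset | #c.support = k} := by
    rw [cycleType_def, Multiset.count_map]
    exact congrArg Multiset.card (Multiset.filter_congr fun c _ => eq_comm)
  rw [periodCount, filter_period_eq_biUnion_support σ hk, card_biUnion hdisj,
    sum_congr rfl fun c hc => (mem_filter.1 hc).2, sum_const, smul_eq_mul, hcount, mul_comm]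

theorem cycleType_eq_of_periodCount_eq {σ : Perm α} {τ : Perm β}
    (h : ∀ k, 0 < k → periodCount σ k = periodCount τ k) : σ.cycleType = τ.cycleType := by
  ext k
  by_cases hk : 2 ≤ k
  · have hcount := h k (by omega)
    rw [periodCount_eq_mul_count_cycleType σ hk, periodCount_eq_mul_count_cycleType τ hk] at hcount
    exact Nat.eq_of_mul_eq_mul_left (by omega) hcount
  · rw [Multiset.count_eq_zero.2 fun hmem => hk (two_le_of_mem_cycleType hmem),
      Multiset.count_eq_zero.2 fun hmem => hk (two_le_of_mem_cycleType hmem)]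

end Equiv.Perm

open Equiv.Perm

theorem same_fixedPoints_pow_imp_same_cycleType
    (m n : ℕ) (sigma : Equiv.Perm (Fin m)) (tau : Equiv.Perm (Fin n))
    (h : ∀ N : ℕ, 0 < N →
      (Finset.univ.filter (fun x : Fin m => (sigma ^ N) x = x)).card
        = (Finset.univ.filter (fun x : Fin n => (tau ^ N) x = x)).card) :
    m = n ∧ sigma.cycleType = tau.cycleType := by
  refine ⟨?_, cycleType_eq_of_periodCount_eq fun k hk =>
    periodCount_eq_of_card_fixedPoints_pow_eq h hk⟩
  set N := orderOf sigma * orderOf tau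
  have hsigma : sigma ^ N = 1 := orderOf_dvd_iff_pow_eq_one.1 (dvd_mul_right _ _)
  have htau : tau ^ N = 1 := orderOf_dvd_iff_pow_eq_one.1 (dvd_mul_left _ _)
  simpa [hsigma, htau] using h N (Nat.mul_pos (orderOf_pos sigma) (orderOf_pos tau))
end

section
/- Let S = {s_1, …, s_c} be a factor-closed set of distinct positive integers and define the c×c matrices E with e_{ij} = 1 if s_j ∣ s_i and 0 otherwise, and Φ = diag(φ(s_1), …, φ(s_c)). Then the gcd matrix M with m_{ij} = gcd(s_i, s_j) factors as M = E Φ Eᵀ. -/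
theorem smith_factorization
    (c : ℕ) (s : Fin c → ℕ) (hs : ∀ i, 0 < s i) (hinj : Function.Injective s)
    (hfc : ∀ i : Fin c, ∀ d : ℕ, 0 < d → d ∣ s i → ∃ j, s j = d) :
    (Matrix.of (fun i j : Fin c => (Nat.gcd (s i) (s j) : ℤ)))
      = (Matrix.of (fun i j : Fin c => if s j ∣ s i then (1 : ℤ) else 0))
        * Matrix.diagonal (fun i => (Nat.totient (s i) : ℤ))
        * (Matrix.of (fun i j : Fin c => if s j ∣ s i then (1 : ℤ) else 0)).transpose := by
  ext i j
  simp only [Matrix.mul_apply, Matrix.diagonal_apply, Matrix.transpose_apply, Matrix.of_apply,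
    mul_ite, mul_zero, ite_mul, zero_mul, Finset.sum_ite_eq', Finset.mem_univ, if_true]
  have key : (∑ k : Fin c, if s k ∣ s j then if s k ∣ s i then
        (1:ℤ) * (Nat.totient (s k) : ℤ) * 1 else 0 else 0)
      = ∑ k ∈ Finset.univ.filter (fun k => s k ∣ Nat.gcd (s i) (s j)),
          (Nat.totient (s k) : ℤ) := by
    rw [Finset.sum_filter]
    apply Finset.sum_congr rfl
    intro k _
    by_cases h1 : s k ∣ s i <;> by_cases h2 : s k ∣ s j <;>
      simp [h1, h2, Nat.dvd_gcd_iff]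
  have hsum : ∑ k ∈ Finset.univ.filter (fun k => s k ∣ Nat.gcd (s i) (s j)),
      (Nat.totient (s k) : ℤ) = ∑ d ∈ (Nat.gcd (s i) (s j)).divisors, (Nat.totient d : ℤ) := by
    apply Finset.sum_bij (fun k _ => s k)
    · intro k hk
      simp only [Finset.mem_filter, Finset.mem_univ, true_and] at hk
      exact Nat.mem_divisors.2 ⟨hk, Nat.gcd_ne_zero_left (hs i).ne'⟩
    · intro a ha b hb h
      exact hinj h
    · intro d hd
      rw [Nat.mem_divisors] at hd
      obtain ⟨k, hk⟩ := hfc i d (Nat.pos_of_mem_divisors (Nat.mem_divisors.2 hd))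
        (hd.1.trans (Nat.gcd_dvd_left _ _))
      exact ⟨k, by simp [hk, hd.1], hk⟩
    · intro k _
      rfl
  rw [key, hsum, ← Nat.cast_sum, Nat.sum_totient]
end

section
/- Let a_1 ≤ … ≤ a_n and b_1 ≤ … ≤ b_n be nondecreasing sequences of positive integers such that ∑_{k=1}^{n} gcd(a_k, N) = ∑_{k=1}^{n} gcd(b_k, N) for every positive integer N dividing L := lcm(a_1,…,a_n,b_1,…,b_n). Then a_i = b_i for all i. -/
/-!
Writing `gcd x N = ∑_{d ∣ gcd x N} φ d` turns the gcd sums into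
`∑_{d ∣ N} φ d * #{k | d ∣ a k}`. Since `φ d > 0`, induction over the divisors of `L` recovers
every divisor count `#{k | m ∣ a k}` (for `m ∤ L` it is `0` on both sides). The divisor counts
determine the multiset of values of a family of positive integers, by downward induction on the
value: `#{k | m ∣ a k}` is the number of `a k` equal to `m` plus the number of larger multiples of
`m`. Two monotone families with the same multiset of values coincide.
-/

open Finset

theorem Nat.sum_gcd_eq_sum_divisors_totient_mul_card {ι : Type*} (s : Finset ι) (c : ι → ℕ)
    {N : ℕ} (hN : N ≠ 0) :
    ∑ i ∈ s, (c i).gcd N = ∑ d ∈ N.divisors, d.totient * #{i ∈ s | d ∣ c i} := by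
  have hgcd (x : ℕ) : x.gcd N = ∑ d ∈ N.divisors with d ∣ x, d.totient := by
    have hdiv : (x.gcd N).divisors = {d ∈ N.divisors | d ∣ x} := by
      ext d
      simp [Nat.dvd_gcd_iff, hN, and_comm]
    rw [← hdiv, Nat.sum_totient]
  simp_rw [hgcd]
  rw [sum_comm' (t' := N.divisors) (s' := fun d => {i ∈ s | d ∣ c i})
    (by simp only [mem_filter]; tauto)]
  simp [mul_comm]

theorem Nat.eq_of_sum_divisors_mul_eq {R : Type*} [Semiring R] [IsCancelAdd R]
    [IsLeftCancelMulZero R] {w f g : ℕ → R} (hw : ∀ d, 0 < d → w d ≠ 0) {L : ℕ}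
    (h : ∀ N, 0 < N → N ∣ L → ∑ d ∈ N.divisors, w d * f d = ∑ d ∈ N.divisors, w d * g d)
    {N : ℕ} (hN : 0 < N) (hNL : N ∣ L) : f N = g N := by
  induction N using Nat.strong_induction_on with
  | _ N ih =>
  have hproper : ∑ d ∈ N.properDivisors, w d * f d = ∑ d ∈ N.properDivisors, w d * g d :=
    sum_congr rfl fun d hd => by
      obtain ⟨hdN, hdlt⟩ := Nat.mem_properDivisors.1 hd
      rw [ih d hdlt (Nat.pos_of_dvd_of_pos hdN hN) (hdN.trans hNL)]
  have hsum := h N hN hNL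
  rw [← Nat.cons_self_properDivisors hN.ne', sum_cons, sum_cons, hproper] at hsum
  exact mul_left_cancel₀ (hw N hN) (add_right_cancel hsum)

namespace Multiset

theorem card_filter_dvd_eq_count_add {s : Multiset ℕ} (hs : 0 ∉ s) (m : ℕ) :
    (s.filter (m ∣ ·)).card = s.count m + ((s.filter (m < ·)).filter (m ∣ ·)).card := by
  rw [← filter_add_not (m = ·) (s.filter (m ∣ ·)), card_add, count_eq_card_filter_eq,
    filter_filter, filter_filter, filter_filter]
  congr 2
  · exact filter_congr fun x _ => and_iff_left_of_imp fun hx => hx ▸ dvd_rfl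
  · refine filter_congr fun x hx =>
      ⟨fun ⟨hne, hdvd⟩ => ⟨hdvd, ?_⟩, fun ⟨hdvd, hlt⟩ => ⟨hlt.ne, hdvd⟩⟩
    exact (Nat.le_of_dvd (Nat.pos_of_ne_zero (ne_of_mem_of_not_mem hx hs)) hdvd).lt_of_ne hne

theorem eq_of_card_filter_dvd_eq {s t : Multiset ℕ} (hs : 0 ∉ s) (ht : 0 ∉ t)
    (h : ∀ m, 0 < m → (s.filter (m ∣ ·)).card = (t.filter (m ∣ ·)).card) : s = t := by
  have hbound : ∀ x ∈ s + t, ¬ (s + t).sup < x := fun x hx => not_lt.2 (le_sup hx)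
  have htail (m : ℕ) (hm : m ≤ (s + t).sup) : s.filter (m < ·) = t.filter (m < ·) := by
    induction hm using Nat.decreasingInduction with
    | self =>
      rw [filter_eq_nil.2 fun x hx => hbound x (mem_add.2 (.inl hx)),
        filter_eq_nil.2 fun x hx => hbound x (mem_add.2 (.inr hx))]
    | of_succ k _ ih =>
      ext x
      simp only [count_filter]
      split_ifs with hkx
      · obtain rfl | hlt := (Nat.succ_le_of_lt hkx).eq_or_lt
        · have hx := h (k + 1) k.succ_pos
          rw [card_filter_dvd_eq_count_add hs, card_filter_dvd_eq_count_add ht, ih] at hx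
          exact add_right_cancel hx
        · simpa [count_filter, hlt] using congrArg (count x) ih
      · rfl
  have hpos {u : Multiset ℕ} (hu : 0 ∉ u) : u.filter (0 < ·) = u :=
    filter_eq_self.2 fun x hx => Nat.pos_of_ne_zero (ne_of_mem_of_not_mem hx hu)
  rw [← hpos hs, ← hpos ht, htail 0 (Nat.zero_le _)]

end Multiset

theorem Fin.eq_of_monotone_of_map_univ_eq {α : Type*} [PartialOrder α] {n : ℕ} {a b : Fin n → α}
    (ha : Monotone a) (hb : Monotone b) (h : univ.val.map a = univ.val.map b) : a = b := by
  rw [Fin.univ_val_map, Fin.univ_val_map, Multiset.coe_eq_coe] at h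
  exact List.ofFn_injective
    (h.eq_of_sortedLE (List.sortedLE_ofFn_iff.2 ha) (List.sortedLE_ofFn_iff.2 hb))

theorem Finset.card_filter_map_univ_val {ι α : Type*} [Fintype ι] (c : ι → α) (p : α → Prop)
    [DecidablePred p] :
    ((univ.val.map c).filter p).card = #{i | p (c i)} := by
  rw [Multiset.filter_map, Multiset.card_map]; rfl

theorem Nat.card_filter_dvd_eq_of_sum_gcd_eq {ι : Type*} [Fintype ι] {a b : ι → ℕ} {L : ℕ}
    (haL : ∀ k, a k ∣ L) (hbL : ∀ k, b k ∣ L)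
    (h : ∀ N, 0 < N → N ∣ L → ∑ k, (a k).gcd N = ∑ k, (b k).gcd N) {m : ℕ} (hm : 0 < m) :
    #{k | m ∣ a k} = #{k | m ∣ b k} := by
  by_cases hmL : m ∣ L
  · refine Nat.eq_of_sum_divisors_mul_eq (f := fun d => #{k | d ∣ a k})
      (g := fun d => #{k | d ∣ b k}) (fun d hd => (Nat.totient_pos.2 hd).ne')
      (fun N hN hNL => ?_) hm hmL
    rw [← Nat.sum_gcd_eq_sum_divisors_totient_mul_card _ _ hN.ne',
      ← Nat.sum_gcd_eq_sum_divisors_totient_mul_card _ _ hN.ne']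
    exact h N hN hNL
  · rw [filter_false_of_mem fun k _ hk => hmL (hk.trans (haL k)),
      filter_false_of_mem fun k _ hk => hmL (hk.trans (hbL k))]

theorem gcd_sum_on_divisors_of_lcm_suffices
    (n : ℕ) (a b : Fin n → ℕ) (ha : ∀ i, 0 < a i) (hb : ∀ i, 0 < b i)
    (hamono : Monotone a) (hbmono : Monotone b)
    (h : ∀ N : ℕ, 0 < N →
      N ∣ Finset.univ.lcm (fun k => Nat.lcm (a k) (b k)) →
      ∑ k, Nat.gcd (a k) N = ∑ k, Nat.gcd (b k) N) :
    ∀ i, a i = b i := by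
  have haL (k : Fin n) : a k ∣ univ.lcm fun k => (a k).lcm (b k) :=
    (Nat.dvd_lcm_left _ _).trans (dvd_lcm (mem_univ k))
  have hbL (k : Fin n) : b k ∣ univ.lcm fun k => (a k).lcm (b k) :=
    (Nat.dvd_lcm_right _ _).trans (dvd_lcm (mem_univ k))
  have hmap : univ.val.map a = univ.val.map b := by
    refine Multiset.eq_of_card_filter_dvd_eq ?_ ?_ fun m hm => ?_
    · simpa using fun k => (ha k).ne'
    · simpa using fun k => (hb k).ne'
    · rw [Finset.card_filter_map_univ_val, Finset.card_filter_map_univ_val]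
      exact Nat.card_filter_dvd_eq_of_sum_gcd_eq haL hbL h hm
  exact congrFun (Fin.eq_of_monotone_of_map_univ_eq hamono hbmono hmap)
end
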